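/- Let X be a closed topological manifold of dimension n and let L : E → F be a bundle morphism between orientable real vector bundles of the same fibre dimension over X. If the second Stiefel–Whitney class of one of the bundles vanishes while that of the other does not (e.g. w₂(E) = 0 and w₂(F) ≠ 0 in H²(X;ℤ₂), i.e. E admits a spin structure and F does not), then the covering dimension of Σ(L) is at least n − 2. -/

import Mathlib

set_option autoImplicit false

noncomputable section

open Bundle Set Module

/-- `HasCovDimLE Y m` : every finite open cover of `Y` has a finite open refinement in which
no point is included in more than `m + 1` elements. -/
def HasCovDimLE (Y : Type) [TopologicalSpace Y] (m : ℕ) : Prop :=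
  ∀ U : Finset (Set Y), (∀ u ∈ U, IsOpen u) → ⋃₀ (U : Set (Set Y)) = Set.univ →
    ∃ V : Finset (Set Y), (∀ v ∈ V, IsOpen v) ∧ ⋃₀ (V : Set (Set Y)) = Set.univ ∧
      (∀ v ∈ V, ∃ u ∈ U, v ⊆ u) ∧
      ∀ y : Y, {v ∈ (V : Set (Set Y)) | y ∈ v}.ncard ≤ m + 1

/-- The covering dimension of a topological space, as an element of `ℕ∞` (`⊤` if no finite
`m` works). -/
def covDim (Y : Type) [TopologicalSpace Y] : ℕ∞ :=
  sInf {d : ℕ∞ | ∃ m : ℕ, d = (m : ℕ∞) ∧ HasCovDimLE Y m}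

/-- The underlying graded groups of: relative singular homology `H_k(Y, A; R)` (with
`H_k(Y; R) = H_k(Y, ∅; R)`), singular cohomology `H^k(Y; G)`, Čech cohomology `Ȟ^k(Y; R)`
and the `Ext`-term `Ext¹_R(H_{k-1}(Y; R), G)` of the universal coefficient theorem. -/
structure CohomologyData (R : Type) [CommRing R] (G : Type) [AddCommGroup G] [Module R G] where
  /-- relative singular homology `H_k(Y, A; R)` -/
  Hrel : ∀ (Y : Type) [TopologicalSpace Y], Set Y → ℤ → Type
  instHrelAdd : ∀ (Y : Type) [TopologicalSpace Y] (A : Set Y) (k : ℤ), AddCommGroup (Hrel Y A k)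
  instHrelMod : ∀ (Y : Type) [TopologicalSpace Y] (A : Set Y) (k : ℤ), Module R (Hrel Y A k)
  /-- singular cohomology `H^k(Y; G)` -/
  Hco : ∀ (Y : Type) [TopologicalSpace Y], ℤ → Type
  instHcoAdd : ∀ (Y : Type) [TopologicalSpace Y] (k : ℤ), AddCommGroup (Hco Y k)
  /-- Čech cohomology `Ȟ^k(Y; R)` -/
  Hcech : ∀ (Y : Type) [TopologicalSpace Y], ℤ → Type
  instHcechAdd : ∀ (Y : Type) [TopologicalSpace Y] (k : ℤ), AddCommGroup (Hcech Y k)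
  /-- the group `Ext¹_R(H_{k-1}(Y; R), G)` appearing in the universal coefficient theorem -/
  ExtUCT : ∀ (Y : Type) [TopologicalSpace Y], ℤ → Type
  instExtAdd : ∀ (Y : Type) [TopologicalSpace Y] (k : ℤ), AddCommGroup (ExtUCT Y k)

attribute [instance] CohomologyData.instHrelAdd CohomologyData.instHrelMod
  CohomologyData.instHcoAdd CohomologyData.instHcechAdd CohomologyData.instExtAdd

/-- An axiomatization of the package consisting of singular homology of pairs (with
coefficients in a PID `R`), singular cohomology (with coefficients in an `R`-module `G`) and
Čech cohomology (with coefficients in `R`), together with: functoriality, the Kronecker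
pairing `α` (written `pair`, `α^k(η)(ξ) = ⟨η, ξ⟩`) and its naturality, the universal
coefficient exact sequence
`0 → Ext¹_R(H_{k-1}(Y;R), G) →^{β^k} H^k(Y;G) →^{α^k} Hom_R(H_k(Y;R), G) → 0`
(exactness at `H^k` and vanishing of the `Ext`-term on free homology), the homology long
exact sequence of a pair (the part `im j_* = ker π_*`), and the fact that non-vanishing of
`Ȟ^m` of a compact Hausdorff space forces its covering dimension to be at least `m`.
All of these are classical facts about the (co)homology of topological spaces; they are the
only properties used in the paper. -/
structure Theory (R : Type) [CommRing R] [IsDomain R] [IsPrincipalIdealRing R]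
    (G : Type) [AddCommGroup G] [Module R G] extends CohomologyData R G where
  /-- functoriality of relative homology for maps of pairs -/
  hmap : ∀ {Y Z : Type} [TopologicalSpace Y] [TopologicalSpace Z]
    (f : C(Y, Z)) {A : Set Y} {B : Set Z}, Set.MapsTo f A B →
    ∀ k : ℤ, Hrel Y A k →ₗ[R] Hrel Z B k
  /-- contravariant functoriality of singular cohomology -/
  cmap : ∀ {Y Z : Type} [TopologicalSpace Y] [TopologicalSpace Z]
    (f : C(Y, Z)) (k : ℤ), Hco Z k →+ Hco Y k
  cmap_id : ∀ (Y : Type) [TopologicalSpace Y] (k : ℤ) (x : Hco Y k),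
    cmap (ContinuousMap.id Y) k x = x
  /-- contravariant functoriality of Čech cohomology -/
  ccmap : ∀ {Y Z : Type} [TopologicalSpace Y] [TopologicalSpace Z]
    (f : C(Y, Z)) (k : ℤ), Hcech Z k →+ Hcech Y k
  /-- the Kronecker pairing `α^k : H^k(Y;G) → Hom_R(H_k(Y;R), G)`, `α^k(η)(ξ) = ⟨η, ξ⟩` -/
  pair : ∀ (Y : Type) [TopologicalSpace Y] (k : ℤ),
    Hco Y k →+ (Hrel Y (∅ : Set Y) k →ₗ[R] G)
  /-- naturality of the Kronecker pairing: `⟨f^*η, ξ⟩ = ⟨η, f_*ξ⟩` -/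
  pair_natural : ∀ {Y Z : Type} [TopologicalSpace Y] [TopologicalSpace Z] (f : C(Y, Z)) (k : ℤ)
    (η : Hco Z k) (ξ : Hrel Y (∅ : Set Y) k),
    pair Y k (cmap f k η) ξ = pair Z k η (hmap f (Set.mapsTo_empty _ _) k ξ)
  /-- the map `β^k : Ext¹_R(H_{k-1}(Y;R), G) → H^k(Y;G)` of the universal coefficient
  theorem -/
  betaMap : ∀ (Y : Type) [TopologicalSpace Y] (k : ℤ), ExtUCT Y k →+ Hco Y k
  /-- exactness of the universal coefficient sequence at `H^k(Y;G)`: `ker α^k = im β^k` -/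
  uct_exact : ∀ (Y : Type) [TopologicalSpace Y] (k : ℤ) (x : Hco Y k),
    pair Y k x = 0 ↔ x ∈ Set.range (betaMap Y k)
  /-- `Ext¹_R(H_{k-1}(Y;R), G)` vanishes if `H_{k-1}(Y;R)` is a free `R`-module -/
  uct_free : ∀ (Y : Type) [TopologicalSpace Y] (k : ℤ),
    Module.Free R (Hrel Y (∅ : Set Y) (k - 1)) → ∀ z : ExtUCT Y k, betaMap Y k z = 0
  /-- exactness of the long exact homology sequence of the pair `(X, X ∖ A)` at `H_k(X)`:
  `π_* ξ = 0` iff `ξ` comes from `H_k(X ∖ A)` -/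
  les_exact : ∀ (X : Type) [TopologicalSpace X] (A : Set X) (k : ℤ)
    (ξ : Hrel X (∅ : Set X) k),
    hmap (ContinuousMap.id X) (Set.mapsTo_empty _ _) k ξ = (0 : Hrel X Aᶜ k) ↔
      ∃ ζ : Hrel (↥(Aᶜ)) (∅ : Set ↥(Aᶜ)) k,
        hmap (⟨Subtype.val, continuous_subtype_val⟩ : C(↥(Aᶜ), X))
          (Set.mapsTo_empty _ _) k ζ = ξ
  /-- if the Čech cohomology `Ȟ^m(Y;R)` of a compact Hausdorff space is non-trivial
  then its covering dimension is at least `m` -/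
  dim_cech : ∀ (Y : Type) [TopologicalSpace Y] [CompactSpace Y] [T2Space Y] (m : ℕ),
    (∃ x : Hcech Y (m : ℤ), x ≠ 0) → (m : ℕ∞) ≤ covDim Y

/-- `X` is `R`-orientable (with respect to the homology theory `T`) if there is a compatible
continuous choice `o(λ)` of generators of the local homology modules
`H_n(X, X ∖ {λ}; R) ≅ R`: i.e. an open cover `{U_i}` of `X` and classes
`μ_i ∈ H_n(X, X ∖ U_i; R)` restricting to `o(λ)` for every `λ ∈ U_i`. -/
def ROrientable {R : Type} [CommRing R] [IsDomain R] [IsPrincipalIdealRing R]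
    {G : Type} [AddCommGroup G] [Module R G] (T : Theory R G)
    (n : ℕ) (X : Type) [TopologicalSpace X] : Prop :=
  ∃ o : ∀ x : X, T.Hrel X ({x}ᶜ) (n : ℤ),
    (∀ x, Submodule.span R {o x} = ⊤) ∧
    ∃ (ι : Type) (U : ι → Set X), (∀ i, IsOpen (U i)) ∧ (∀ x, ∃ i, x ∈ U i) ∧
      ∃ μ : ∀ i, T.Hrel X ((U i)ᶜ) (n : ℤ),
        ∀ (i) (x) (hx : x ∈ U i),
          T.hmap (ContinuousMap.id X)
            ((Set.mapsTo_id _).mono_right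
              (Set.compl_subset_compl.mpr (Set.singleton_subset_iff.mpr hx)))
            (n : ℤ) (μ i) = o x

/-- The full package: the (co)homology theories together with Poincaré–Lefschetz duality for
closed `R`-orientable topological `n`-manifolds (in the form of [Bredon, Cor. VI.8.4]: for a
closed subset `A ⊆ X` there is a commutative square consisting of the duality isomorphisms
`Ȟ^{n-k}(X;R) ≅ H_k(X;R)` and `Ȟ^{n-k}(A;R) ≅ H_k(X, X∖A;R)`, the restriction
`i^* : Ȟ^{n-k}(X;R) → Ȟ^{n-k}(A;R)` and `π_* : H_k(X;R) → H_k(X, X∖A;R)`), and the fact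
that every closed topological manifold is `R`-orientable when `2 = 0` in `R`. -/
structure GoodTheory (R : Type) [CommRing R] [IsDomain R] [IsPrincipalIdealRing R]
    (G : Type) [AddCommGroup G] [Module R G] extends Theory R G where
  /-- Poincaré–Lefschetz duality -/
  pd : ∀ (n : ℕ) (X : Type) [TopologicalSpace X] [T2Space X]
    [ChartedSpace (EuclideanSpace ℝ (Fin n)) X] [CompactSpace X],
    ROrientable toTheory n X →
    ∀ (k : ℤ) (A : Set X), IsClosed A →
      ∃ (pdX : Hcech X ((n : ℤ) - k) ≃+ Hrel X (∅ : Set X) k)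
        (pdA : Hcech (↥A) ((n : ℤ) - k) ≃+ Hrel X Aᶜ k),
        ∀ η : Hcech X ((n : ℤ) - k),
          pdA (ccmap (⟨Subtype.val, continuous_subtype_val⟩ : C(↥A, X)) ((n : ℤ) - k) η) =
          hmap (ContinuousMap.id X) (Set.mapsTo_empty _ _) k (pdX η)
  /-- every closed topological manifold is `R`-orientable if `2 = 0` in `R` -/
  orient_two : (2 : R) = 0 → ∀ (n : ℕ) (X : Type) [TopologicalSpace X] [T2Space X]
    [ChartedSpace (EuclideanSpace ℝ (Fin n)) X] [CompactSpace X],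
    ROrientable toTheory n X

/-- A (finite rank) vector bundle over the base `Y` with scalar field `𝕜`, packaged as a
structure: a model fibre `F` and a family of fibres `E y` together with all the data making
it a topological vector bundle. -/
structure VB (𝕜 : Type) [NontriviallyNormedField 𝕜] (Y : Type) [TopologicalSpace Y] :
    Type 1 where
  /-- the model fibre -/
  F : Type
  [nF : NormedAddCommGroup F]
  [sF : NormedSpace 𝕜 F]
  [fdF : FiniteDimensional 𝕜 F]
  /-- the fibres -/
  E : Y → Type
  [aE : ∀ y, AddCommGroup (E y)]
  [mE : ∀ y, Module 𝕜 (E y)]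
  [tE : ∀ y, TopologicalSpace (E y)]
  [tT : TopologicalSpace (Bundle.TotalSpace F E)]
  [fb : FiberBundle F E]
  [vb : VectorBundle 𝕜 F E]

attribute [instance] VB.nF VB.sF VB.fdF VB.aE VB.mE VB.tE VB.tT VB.fb VB.vb

/-- A morphism of vector bundles over `X`: a fibrewise (continuous) linear map which is
continuous as a map of total spaces. -/
def IsBundleMorphism {𝕜 : Type} [NontriviallyNormedField 𝕜] {X : Type} [TopologicalSpace X]
    (V W : VB 𝕜 X) (L : ∀ x, V.E x →L[𝕜] W.E x) : Prop :=
  Continuous fun p : Bundle.TotalSpace V.F V.E =>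
    (Bundle.TotalSpace.mk p.1 (L p.1 p.2) : Bundle.TotalSpace W.F W.E)

/-- The singular set `Σ(L) = {λ ∈ X | L_λ ∉ GL(E_λ, F_λ)}` of a bundle morphism `L`:
the set of points of the base over which `L` is not a linear isomorphism of fibres. -/
def singularSet {𝕜 : Type} [NontriviallyNormedField 𝕜] {X : Type} [TopologicalSpace X]
    (V W : VB 𝕜 X) (L : ∀ x, V.E x →L[𝕜] W.E x) : Set X :=
  {x : X | ¬ Function.Bijective (L x)}

/-- An `H^k(·;G)`-valued characteristic class `c`: it assigns to every vector bundle over a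
base `Y` a class `c(E) ∈ H^k(Y;G)`, such that `c(E₁) = f^* c(E₂)` whenever a continuous map
`f : Y → Z` is covered by a (fibrewise isomorphic, continuous) bundle map `E₁ → E₂`. -/
structure CharClass {R : Type} [CommRing R] [IsDomain R] [IsPrincipalIdealRing R]
    {G : Type} [AddCommGroup G] [Module R G] (T : GoodTheory R G)
    (𝕜 : Type) [NontriviallyNormedField 𝕜] (k : ℤ) where
  /-- the value of the characteristic class on a bundle -/
  cls : ∀ (Y : Type) [TopologicalSpace Y], VB 𝕜 Y → T.Hco Y k
  /-- naturality with respect to bundle maps covering continuous maps -/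
  natural : ∀ (Y Z : Type) [TopologicalSpace Y] [TopologicalSpace Z]
    (V : VB 𝕜 Y) (W : VB 𝕜 Z) (f : C(Y, Z)) (φ : ∀ y, V.E y ≃ₗ[𝕜] W.E (f y)),
    Continuous (fun p : Bundle.TotalSpace V.F V.E =>
      (Bundle.TotalSpace.mk (f p.1) (φ p.1 p.2) : Bundle.TotalSpace W.F W.E)) →
    cls Y V = T.cmap f k (cls Z W)

/-- `o` is an orientation of the real vector bundle `V` of rank `r`: a function assigning an
orientation to each fibre in such a way that near each point of the base the local
trivialization carries the orientations of the fibres into one fixed orientation of the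
model fibre. -/
def IsBundleOrientation {Y : Type} [TopologicalSpace Y] (r : ℕ) (V : VB ℝ Y)
    (o : ∀ y, Orientation ℝ (V.E y) (Fin r)) : Prop :=
  ∀ y₀ : Y, ∃ ω : Orientation ℝ V.F (Fin r),
    ∀ (y) (hy : y ∈ (trivializationAt V.F V.E y₀).baseSet),
      Orientation.map (Fin r)
        ((trivializationAt V.F V.E y₀).continuousLinearEquivAt ℝ y hy).toLinearEquiv
        (o y) = ω

/-- A real vector bundle is orientable if it admits an orientation. -/
def BundleOrientable {Y : Type} [TopologicalSpace Y] (V : VB ℝ Y) : Prop :=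
  ∃ o : ∀ y, Orientation ℝ (V.E y) (Fin (Module.finrank ℝ V.F)),
    IsBundleOrientation (Module.finrank ℝ V.F) V o

/-!
Over `X ∖ Σ(L)` the morphism `L` is an isomorphism `E ≅ F`, so by naturality `w₂(E)` and `w₂(F)`
restrict to the same class there; hence the non-zero one, `c`, restricts to zero on `X ∖ Σ(L)`.
With `ℤ₂` coefficients the Kronecker pairing is injective, so some `ξ ∈ H₂(X)` has `⟨c, ξ⟩ ≠ 0`;
by naturality of the pairing `ξ` does not come from `H₂(X ∖ Σ(L))`, i.e. its image in
`H₂(X, X ∖ Σ(L))` is non-zero. Since invertibility is an open condition, `Σ(L)` is closed, and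
every closed manifold is `ℤ₂`-orientable, so Poincaré–Lefschetz duality gives
`Ȟ^{n-2}(Σ(L); ℤ₂) ≅ H₂(X, X ∖ Σ(L); ℤ₂) ≠ 0`, which forces `dim Σ(L) ≥ n - 2`.
-/

theorem ContinuousLinearMap.bijective_iff_mem_range_continuousLinearEquiv
    {𝕜 : Type} [NontriviallyNormedField 𝕜] [CompleteSpace 𝕜]
    {E F : Type} [NormedAddCommGroup E] [NormedSpace 𝕜 E] [FiniteDimensional 𝕜 E]
    [NormedAddCommGroup F] [NormedSpace 𝕜 F] (f : E →L[𝕜] F) :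
    Function.Bijective f ↔ f ∈ range ((↑) : (E ≃L[𝕜] F) → E →L[𝕜] F) := by
  refine ⟨fun hf => ⟨(LinearEquiv.ofBijective (f : E →ₗ[𝕜] F) hf).toContinuousLinearEquiv, ?_⟩,
    fun ⟨e, he⟩ => he ▸ e.bijective⟩
  ext v
  rfl

section SingularSet

variable {𝕜 : Type} [NontriviallyNormedField 𝕜] {X : Type} [TopologicalSpace X]
  {V W : VB 𝕜 X}

theorem bijective_inCoordinates_iff {x₀ x : X} (hxV : x ∈ (trivializationAt V.F V.E x₀).baseSet)
    (hxW : x ∈ (trivializationAt W.F W.E x₀).baseSet) (φ : V.E x →L[𝕜] W.E x) :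
    Function.Bijective (ContinuousLinearMap.inCoordinates V.F V.E W.F W.E x₀ x x₀ x φ) ↔
      Function.Bijective φ := by
  rw [ContinuousLinearMap.inCoordinates_eq hxV hxW, ContinuousLinearMap.coe_comp,
    ContinuousLinearMap.coe_comp, ContinuousLinearEquiv.coe_coe, ContinuousLinearEquiv.coe_coe,
    Function.Bijective.of_comp_iff' (ContinuousLinearEquiv.bijective _),
    Function.Bijective.of_comp_iff _ (ContinuousLinearEquiv.bijective _)]

theorem IsBundleMorphism.continuousOn_inCoordinates [CompleteSpace 𝕜]
    {L : ∀ x, V.E x →L[𝕜] W.E x} (hL : IsBundleMorphism V W L) (x₀ : X) :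
    ContinuousOn (fun x => ContinuousLinearMap.inCoordinates V.F V.E W.F W.E x₀ x x₀ x (L x))
      ((trivializationAt V.F V.E x₀).baseSet ∩ (trivializationAt W.F W.E x₀).baseSet) := by
  set e := trivializationAt V.F V.E x₀
  set e' := trivializationAt W.F W.E x₀
  refine continuousOn_clm_apply.mpr fun v => ?_
  have hsection : ContinuousOn (fun x => (⟨x, e.symm x v⟩ : TotalSpace V.F V.E)) e.baseSet :=
    e.continuousOn_symm.comp (continuous_id.prodMk continuous_const).continuousOn
      fun x hx => ⟨hx, mem_univ _⟩
  have hmapped : ContinuousOn (fun x => e' ⟨x, L x (e.symm x v)⟩) (e.baseSet ∩ e'.baseSet) :=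
    e'.continuousOn.comp (hL.comp_continuousOn hsection |>.mono inter_subset_left)
      fun x hx => e'.mem_source.mpr hx.2
  refine (continuous_snd.comp_continuousOn hmapped).congr fun x hx => ?_
  simp only [ContinuousLinearMap.inCoordinates, ContinuousLinearMap.comp_apply, Function.comp_apply]
  rw [Trivialization.continuousLinearMapAt_apply, Trivialization.linearMapAt_apply, if_pos hx.2,
    Trivialization.symmL_apply _ hx.1]

theorem isOpen_setOf_bijective [CompleteSpace 𝕜]
    {L : ∀ x, V.E x →L[𝕜] W.E x} (hL : IsBundleMorphism V W L) :
    IsOpen {x | Function.Bijective (L x)} := by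
  have : CompleteSpace V.F := FiniteDimensional.complete 𝕜 V.F
  refine isOpen_iff_mem_nhds.mpr fun x₀ hx₀ => ?_
  have hx₀U : x₀ ∈ (trivializationAt V.F V.E x₀).baseSet ∩ (trivializationAt W.F W.E x₀).baseSet :=
    ⟨FiberBundle.mem_baseSet_trivializationAt' x₀, FiberBundle.mem_baseSet_trivializationAt' x₀⟩
  have hopen := (hL.continuousOn_inCoordinates x₀).isOpen_inter_preimage
    ((trivializationAt V.F V.E x₀).open_baseSet.inter (trivializationAt W.F W.E x₀).open_baseSet)
    ContinuousLinearEquiv.isOpen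
  refine Filter.mem_of_superset (hopen.mem_nhds ⟨hx₀U, ?_⟩) fun x ⟨hxU, hx⟩ => ?_
  · exact (ContinuousLinearMap.bijective_iff_mem_range_continuousLinearEquiv _).mp
      ((bijective_inCoordinates_iff hx₀U.1 hx₀U.2 _).mpr hx₀)
  · exact (bijective_inCoordinates_iff hxU.1 hxU.2 _).mp
      ((ContinuousLinearMap.bijective_iff_mem_range_continuousLinearEquiv _).mpr hx)

theorem isClosed_singularSet [CompleteSpace 𝕜]
    {L : ∀ x, V.E x →L[𝕜] W.E x} (hL : IsBundleMorphism V W L) :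
    IsClosed (singularSet V W L) := by
  rw [← isOpen_compl_iff]
  simpa only [singularSet, compl_ofPred, not_not] using isOpen_setOf_bijective hL

end SingularSet

theorem Bundle.Pullback.continuous_iff {B B' Z F : Type} [TopologicalSpace B]
    [TopologicalSpace B'] [TopologicalSpace Z] {E : B → Type} [TopologicalSpace (TotalSpace F E)]
    {f : B' → B} {g : Z → TotalSpace F (f *ᵖ E)} :
    Continuous g ↔ Continuous (TotalSpace.proj ∘ g) ∧ Continuous (Pullback.lift f ∘ g) := by
  simp only [continuous_iff_le_induced, Pullback.TotalSpace.topologicalSpace, pullbackTopology_def,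
    induced_inf, induced_compose, le_inf_iff]

def VB.pullback {𝕜 : Type} [NontriviallyNormedField 𝕜] {Y X : Type} [TopologicalSpace Y]
    [TopologicalSpace X] (V : VB 𝕜 X) (f : C(Y, X)) : VB 𝕜 Y where
  F := V.F
  E := (f : Y → X) *ᵖ V.E
  aE := fun y => inferInstanceAs (AddCommGroup (V.E (f y)))
  mE := fun y => inferInstanceAs (Module 𝕜 (V.E (f y)))
  tE := fun y => inferInstanceAs (TopologicalSpace (V.E (f y)))
  tT := Pullback.TotalSpace.topologicalSpace V.F V.E (f : Y → X)
  fb := FiberBundle.pullback (F := V.F) (E := V.E) f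
  vb := VectorBundle.pullback (F := V.F) (E := V.E) 𝕜 f

namespace CharClass

variable {R : Type} [CommRing R] [IsDomain R] [IsPrincipalIdealRing R]
  {G : Type} [AddCommGroup G] [Module R G] {T : GoodTheory R G}
  {𝕜 : Type} [NontriviallyNormedField 𝕜] {k : ℤ} (c : CharClass T 𝕜 k)
  {Y X : Type} [TopologicalSpace Y] [TopologicalSpace X]

theorem cls_pullback (V : VB 𝕜 X) (f : C(Y, X)) :
    c.cls Y (V.pullback f) = T.cmap f k (c.cls X V) :=
  c.natural Y X (V.pullback f) V f (fun y => LinearEquiv.refl 𝕜 (V.E (f y)))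
    (Pullback.continuous_lift V.F V.E f)

theorem cls_pullback_eq_of_bijective {V W : VB 𝕜 X} {L : ∀ x, V.E x →L[𝕜] W.E x}
    (hL : IsBundleMorphism V W L) (f : C(Y, X)) (hf : ∀ y, Function.Bijective (L (f y))) :
    c.cls Y (V.pullback f) = c.cls Y (W.pullback f) := by
  have h := c.natural Y Y (V.pullback f) (W.pullback f) (ContinuousMap.id Y)
    (fun y => LinearEquiv.ofBijective (L (f y) : V.E (f y) →ₗ[𝕜] W.E (f y)) (hf y))
    (Pullback.continuous_iff (F := W.F) (E := W.E) (f := f).mpr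
      ⟨Pullback.continuous_proj V.F V.E f, hL.comp (Pullback.continuous_lift V.F V.E f)⟩)
  rwa [T.cmap_id] at h

theorem cmap_cls_eq_of_bijective {V W : VB 𝕜 X} {L : ∀ x, V.E x →L[𝕜] W.E x}
    (hL : IsBundleMorphism V W L) (f : C(Y, X)) (hf : ∀ y, Function.Bijective (L (f y))) :
    T.cmap f k (c.cls X V) = T.cmap f k (c.cls X W) := by
  rw [← c.cls_pullback, ← c.cls_pullback, c.cls_pullback_eq_of_bijective hL f hf]

end CharClass

namespace Theory

variable {R : Type} [CommRing R] [IsDomain R] [IsPrincipalIdealRing R]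
  {G : Type} [AddCommGroup G] [Module R G] (T : Theory R G) {X : Type} [TopologicalSpace X]

theorem exists_pair_ne_zero {k : ℤ} (hfree : Module.Free R (T.Hrel X ∅ (k - 1)))
    {c : T.Hco X k} (hc : c ≠ 0) : ∃ ξ, T.pair X k c ξ ≠ 0 := by
  by_contra! h
  obtain ⟨z, rfl⟩ := (T.uct_exact X k c).mp (LinearMap.ext h)
  exact hc (T.uct_free X k hfree z)

theorem exists_hmap_ne_zero_of_cmap_eq_zero {A : Set X} {k : ℤ}
    (hfree : Module.Free R (T.Hrel X ∅ (k - 1))) {c : T.Hco X k} (hc : c ≠ 0)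
    (hcA : T.cmap (⟨Subtype.val, continuous_subtype_val⟩ : C(↥Aᶜ, X)) k c = 0) :
    ∃ ξ : T.Hrel X ∅ k, T.hmap (ContinuousMap.id X) (mapsTo_empty _ _) k ξ ≠ (0 : T.Hrel X Aᶜ k) := by
  obtain ⟨ξ, hξ⟩ := T.exists_pair_ne_zero hfree hc
  refine ⟨ξ, fun hπ => hξ ?_⟩
  obtain ⟨ζ, rfl⟩ := (T.les_exact X A k ξ).mp hπ
  rw [← T.pair_natural, hcA, map_zero, LinearMap.zero_apply]

end Theory

theorem GoodTheory.le_covDim_of_ne_zero {R : Type} [CommRing R] [IsDomain R]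
    [IsPrincipalIdealRing R] {G : Type} [AddCommGroup G] [Module R G] (T : GoodTheory R G)
    {n : ℕ} {X : Type} [TopologicalSpace X] [T2Space X]
    [ChartedSpace (EuclideanSpace ℝ (Fin n)) X] [CompactSpace X]
    (hX : ROrientable T.toTheory n X) {A : Set X} (hA : IsClosed A) {k : ℕ}
    (hk : ∃ x : T.Hrel X Aᶜ k, x ≠ 0) : ((n - k : ℕ) : ℕ∞) ≤ covDim A := by
  rcases lt_or_ge n k with hnk | hkn
  · simp [Nat.sub_eq_zero_of_le hnk.le]
  have : CompactSpace A := isCompact_iff_compactSpace.mp hA.isCompact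
  obtain ⟨_, pdA, -⟩ := T.pd n X hX k A hA
  obtain ⟨x, hx⟩ := hk
  refine T.dim_cech A (n - k) ?_
  rw [Nat.cast_sub hkn]
  exact ⟨pdA.symm x, by simpa using hx⟩

theorem covDim_ge_of_stiefelWhitney_two_general
    (T : GoodTheory (ZMod 2) (ZMod 2))
    (n : ℕ) (X : Type) [TopologicalSpace X] [T2Space X]
    [ChartedSpace (EuclideanSpace ℝ (Fin n)) X] [CompactSpace X]
    (V W : VB ℝ X)
    (L : ∀ x, V.E x →L[ℝ] W.E x) (hL : IsBundleMorphism V W L)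
    (w : CharClass T ℝ (2 : ℤ))
    (hw : (w.cls X V = 0 ∧ w.cls X W ≠ 0) ∨ (w.cls X V ≠ 0 ∧ w.cls X W = 0)) :
    ((n - 2 : ℕ) : ℕ∞) ≤ covDim ↥(singularSet V W L) := by
  set S := singularSet V W L
  let j : C(↥Sᶜ, X) := ⟨Subtype.val, continuous_subtype_val⟩
  have hj : T.cmap j 2 (w.cls X V) = T.cmap j 2 (w.cls X W) :=
    w.cmap_cls_eq_of_bijective hL j fun y => not_not.mp y.2
  obtain ⟨c, hc, hcj⟩ : ∃ c : T.Hco X 2, c ≠ 0 ∧ T.cmap j 2 c = 0 := by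
    rcases hw with ⟨hV, hW⟩ | ⟨hV, hW⟩
    · exact ⟨_, hW, by rw [← hj, hV, map_zero]⟩
    · exact ⟨_, hV, by rw [hj, hW, map_zero]⟩
  have : Fact (Nat.Prime 2) := ⟨Nat.prime_two⟩
  obtain ⟨ξ, hξ⟩ := T.exists_hmap_ne_zero_of_cmap_eq_zero (Module.Free.of_divisionRing _ _) hc hcj
  exact T.le_covDim_of_ne_zero (T.orient_two (by decide) n X) (isClosed_singularSet hL) (k := 2)
    ⟨_, hξ⟩

/-- Let `X` be a closed topological manifold of dimension `n` and let
`L : E → F` be a bundle morphism between orientable real vector bundles of the same fibre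
dimension over `X`. If the second Stiefel–Whitney class of one of the bundles vanishes while
that of the other does not (`w₂(E) = 0` and `w₂(F) ≠ 0` in `H²(X;ℤ₂)`, i.e. `E` admits a
spin structure and `F` does not, or vice versa), then the covering dimension of `Σ(L)` is at
least `n - 2`.
(The second Stiefel–Whitney class is represented by an `H²(·;ℤ₂)`-valued characteristic
class `w`.) -/
theorem covDim_ge_of_stiefelWhitney_two
    (T : GoodTheory (ZMod 2) (ZMod 2))
    (n : ℕ) (X : Type) [TopologicalSpace X] [T2Space X]
    [ChartedSpace (EuclideanSpace ℝ (Fin n)) X] [CompactSpace X]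
    (V W : VB ℝ X) (hrank : Module.finrank ℝ V.F = Module.finrank ℝ W.F)
    (hV : BundleOrientable V) (hW : BundleOrientable W)
    (L : ∀ x, V.E x →L[ℝ] W.E x) (hL : IsBundleMorphism V W L)
    (w : CharClass T ℝ (2 : ℤ))
    (hw : (w.cls X V = 0 ∧ w.cls X W ≠ 0) ∨ (w.cls X V ≠ 0 ∧ w.cls X W = 0)) :
    ((n - 2 : ℕ) : ℕ∞) ≤ covDim ↥(singularSet V W L) :=
  covDim_ge_of_stiefelWhitney_two_general T n X V W L hL w hw

end
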